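/- arXiv:2310.14647 — 2 statements merged into one kernel-verified Lean document; each statement's English description precedes it below -/
import Mathlib

section
/- Let G be a graph with minimum degree δ and order n with n ≥ 2δ + 2. Then γᵢ(G) = n − δ if and only if G contains a spanning complete bipartite subgraph K_{δ, n−δ} such that the part of the bipartition of size n − δ is an independent set in G. -/
open Finset

open scoped Classical

noncomputable section

namespace IndicatedDom

variable {V : Type*} [Fintype V]

/-- Closed neighborhood `N[v]` as a `Finset`. -/
def cnbhd (G : SimpleGraph V) (v : V) : Finset V :=
  insert v (G.neighborFinset v)

/-- `D` is a dominating set of `G`. -/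
def Dominates (G : SimpleGraph V) (D : Finset V) : Prop :=
  ∀ u, ∃ v ∈ D, u ∈ cnbhd G v

/-- The set of vertices not dominated by `D`. -/
def undom (G : SimpleGraph V) (D : Finset V) : Finset V :=
  univ.filter fun u => ∀ v ∈ D, u ∉ cnbhd G v

/-- Game value of the indicated domination game with a fuel parameter:
given the set `D` of vertices selected so far, Dominator indicates an
undominated vertex `u` (minimizing), Staller selects a vertex of `N[u]`
(maximizing); each selection counts one. -/
def giAux (G : SimpleGraph V) : ℕ → Finset V → ℕ
  | 0, _ => 0
  | (fuel+1), D =>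
    if h : (undom G D).Nonempty then
      (undom G D).inf' h fun u =>
        (cnbhd G u).sup' ⟨u, Finset.mem_insert_self u _⟩ fun v => giAux G fuel (insert v D) + 1
    else 0

/-- The indicated domination number `γᵢ(G)`. -/
def indicatedDomNum (G : SimpleGraph V) : ℕ :=
  giAux G (Fintype.card V) ∅

/-- Game value of the standard domination game with a fuel parameter:
`dom = true` means it is Dominator's turn (minimizing); legal moves are
vertices dominating at least one new vertex. -/
def gameAux (G : SimpleGraph V) : ℕ → Bool → Finset V → ℕ
  | 0, _, _ => 0
  | (fuel+1), dom, D =>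
    if h : (univ.filter fun v => ∃ u ∈ cnbhd G v, u ∈ undom G D).Nonempty then
      if dom then
        (univ.filter fun v => ∃ u ∈ cnbhd G v, u ∈ undom G D).inf' h
          fun v => gameAux G fuel false (insert v D) + 1
      else
        (univ.filter fun v => ∃ u ∈ cnbhd G v, u ∈ undom G D).sup' h
          fun v => gameAux G fuel true (insert v D) + 1
    else 0

/-- The game domination number `γ_g(G)` (Dominator starts). -/
def gameDomNum (G : SimpleGraph V) : ℕ :=
  gameAux G (Fintype.card V) true ∅

/-- A minimal dominating set. -/
def IsMinimalDominating (G : SimpleGraph V) (D : Finset V) : Prop :=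
  Dominates G D ∧ ∀ D' ⊂ D, ¬ Dominates G D'

/-- The upper domination number `Γ(G)`. -/
def upperDomNum (G : SimpleGraph V) : ℕ :=
  sSup {k | ∃ D : Finset V, IsMinimalDominating G D ∧ D.card = k}

/-- A dominating (Grundy) sequence: every vertex dominates something new,
and the whole sequence dominates `G`. -/
def IsDominatingSeq (G : SimpleGraph V) (l : List V) : Prop :=
  (∀ i : Fin l.length, ∃ u, u ∈ cnbhd G (l.get i) ∧
      ∀ j : Fin l.length, (j : ℕ) < (i : ℕ) → u ∉ cnbhd G (l.get j)) ∧
    Dominates G l.toFinset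

/-- The Grundy domination number `γ_gr(G)`. -/
def grundyDomNum (G : SimpleGraph V) : ℕ :=
  sSup {k | ∃ l : List V, IsDominatingSeq G l ∧ l.length = k}

/-- The independence number `α(G)`. -/
def indepNum (G : SimpleGraph V) : ℕ :=
  sSup {k | ∃ S : Finset V, (∀ x ∈ S, ∀ y ∈ S, ¬ G.Adj x y) ∧ S.card = k}

/-- `S` is irredundant: every `x ∈ S` has a private neighbor w.r.t. `S`. -/
def Irredundant (G : SimpleGraph V) (S : Finset V) : Prop :=
  ∀ x ∈ S, ∃ w, (∃ v ∈ S, w ∈ cnbhd G v) ∧ ¬ ∃ v ∈ S.erase x, w ∈ cnbhd G v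

/-- The upper irredundance number `IR(G)`. -/
def upperIrredNum (G : SimpleGraph V) : ℕ :=
  sSup {k | ∃ S : Finset V, Irredundant G S ∧ (∀ T, S ⊂ T → ¬ Irredundant G T) ∧ S.card = k}

/-- The star `K_{1,n}` with center `0`. -/
def starGraph (n : ℕ) : SimpleGraph (Fin (n+1)) where
  Adj a b := a ≠ b ∧ (a = 0 ∨ b = 0)
  symm := by constructor; intro a b h; exact ⟨h.1.symm, h.2.symm⟩
  loopless := by constructor; intro a h; exact h.1 rfl

/-- Two copies of `K_n` with a matching joining corresponding vertices of
index `≥ 1` (i.e. `K_n □ K₂` minus the matching edge at index `0`). -/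
def Hgraph (n : ℕ) : SimpleGraph (Fin n × Bool) where
  Adj a b := (a.2 = b.2 ∧ a.1 ≠ b.1) ∨ (a.2 ≠ b.2 ∧ a.1 = b.1 ∧ (a.1 : ℕ) ≠ 0)
  symm := by
    constructor
    rintro ⟨i, s⟩ ⟨j, t⟩ (⟨h1, h2⟩ | ⟨h1, h2, h3⟩)
    · exact Or.inl ⟨h1.symm, h2.symm⟩
    · exact Or.inr ⟨h1.symm, h2.symm, h2 ▸ h3⟩
  loopless := by constructor; rintro ⟨i, s⟩ (⟨_, h⟩ | ⟨h, _⟩) <;> exact h rfl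

/-- The `k`-th power of the path on `n` vertices: `i ~ j` iff `1 ≤ |i-j| ≤ k`. -/
def pathPow (n k : ℕ) : SimpleGraph (Fin n) where
  Adj i j := i ≠ j ∧ (i : ℕ) ≤ (j : ℕ) + k ∧ (j : ℕ) ≤ (i : ℕ) + k
  symm := by constructor; intro i j h; exact ⟨h.1.symm, h.2.2, h.2.1⟩
  loopless := by constructor; intro i h; exact h.1 rfl

/-- The cycle on `m` vertices (for `m ≥ 3`), modeled on `ZMod m`. -/
def cyc (m : ℕ) : SimpleGraph (ZMod m) where
  Adj i j := i ≠ j ∧ (i + 1 = j ∨ j + 1 = i)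
  symm := by constructor; intro i j h; exact ⟨h.1.symm, h.2.symm⟩
  loopless := by constructor; intro i h; exact h.1 rfl

/-- The graph `D₁`: a `9`-cycle `x₁x₂…x₉` plus chords `x₁x₃, x₄x₆, x₇x₉`
(vertex `xᵢ` is represented by `i - 1 : ZMod 9`). -/
def DGraph : SimpleGraph (ZMod 9) where
  Adj i j := i ≠ j ∧ (i + 1 = j ∨ j + 1 = i ∨
    (i = 0 ∧ j = 2) ∨ (i = 2 ∧ j = 0) ∨ (i = 3 ∧ j = 5) ∨ (i = 5 ∧ j = 3) ∨
    (i = 6 ∧ j = 8) ∨ (i = 8 ∧ j = 6))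
  symm := by constructor; intro i j h; refine ⟨h.1.symm, ?_⟩; tauto
  loopless := by constructor; intro i h; exact h.1 rfl

/-! Every move dominates the indicated vertex, so `γᵢ(G) ≤ 1 + (n - 1 - deg v) ≤ n - δ`, where `v`
is Staller's first selection. Equality forces `deg v = δ` and forces Staller to dominate exactly one
new vertex per move from then on; this can be answered for every indication only if each vertex
`u ∉ N[v]` has a private dominator, a vertex of `N[u]` dominating no other vertex outside `N[v]`.
Private dominators of vertices with a neighbour outside `N[v]` lie in `N(v)` and are distinct, so at
most `δ < n - δ - 1` such vertices exist. A vertex `z` outside `N[v]` without such a neighbour has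
`N(z) = N(v)` by minimality of `δ`, and then lies in the closed neighbourhood of every private
dominator in `N(v)`; hence `V \ N[v]` is independent, and `B = V \ N(v)` works.
Conversely, given such a `B`, Staller always selects a vertex `b ∈ B`, after which each vertex of
`B \ {b}` is its own private dominator. -/

section PrivateDominators

variable {G : SimpleGraph V} {D S T : Finset V} {u v w x z : V}

@[simp]
lemma mem_cnbhd : u ∈ cnbhd G v ↔ u = v ∨ G.Adj v u := by
  simp [cnbhd]

lemma self_mem_cnbhd (G : SimpleGraph V) (v : V) : v ∈ cnbhd G v :=
  mem_insert_self _ _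

lemma mem_cnbhd_comm : u ∈ cnbhd G v ↔ v ∈ cnbhd G u := by
  simp only [mem_cnbhd, eq_comm, G.adj_comm]

lemma card_cnbhd (G : SimpleGraph V) (v : V) : #(cnbhd G v) = G.degree v + 1 := by
  rw [cnbhd, card_insert_of_notMem (by simp), SimpleGraph.card_neighborFinset_eq_degree]

lemma undom_insert (G : SimpleGraph V) (w : V) (D : Finset V) :
    undom G (insert w D) = undom G D \ cnbhd G w := by
  ext u
  simp only [undom, mem_filter, mem_univ, true_and, mem_sdiff, forall_mem_insert]
  exact and_comm

lemma undom_insert_subset (G : SimpleGraph V) (w : V) (D : Finset V) :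
    undom G (insert w D) ⊆ undom G D := by
  rw [undom_insert]
  exact sdiff_subset

lemma card_undom_insert (G : SimpleGraph V) (w : V) (D : Finset V) :
    #(undom G (insert w D)) + #(cnbhd G w ∩ undom G D) = #(undom G D) := by
  rw [undom_insert, inter_comm, card_sdiff_add_card_inter]

lemma undom_empty (G : SimpleGraph V) : undom G ∅ = univ := by
  ext u
  simp [undom]

lemma undom_singleton (G : SimpleGraph V) (v : V) : undom G {v} = (cnbhd G v)ᶜ := by
  ext u
  simp [undom]

lemma card_undom_singleton (G : SimpleGraph V) (v : V) :
    #(undom G {v}) + (G.degree v + 1) = Fintype.card V := by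
  rw [undom_singleton, ← card_cnbhd, card_compl_add_card]

def HasPrivateDominators (G : SimpleGraph V) (S : Finset V) : Prop :=
  ∀ u ∈ S, ∃ v ∈ cnbhd G u, cnbhd G v ∩ S = {u}

lemma HasPrivateDominators.mono (h : HasPrivateDominators G S) (hTS : T ⊆ S) :
    HasPrivateDominators G T := by
  intro u hu
  obtain ⟨v, hv, hvS⟩ := h u (hTS hu)
  refine ⟨v, hv, eq_singleton_iff_unique_mem.2 ⟨mem_inter.2 ⟨mem_cnbhd_comm.1 hv, hu⟩, ?_⟩⟩
  intro x hx
  exact mem_singleton.1 (hvS ▸ inter_subset_inter_left hTS hx)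

lemma hasPrivateDominators_of_independent (hS : ∀ x ∈ S, ∀ y ∈ S, ¬ G.Adj x y) :
    HasPrivateDominators G S := by
  intro u hu
  refine ⟨u, self_mem_cnbhd G u,
    eq_singleton_iff_unique_mem.2 ⟨mem_inter.2 ⟨self_mem_cnbhd G u, hu⟩, ?_⟩⟩
  intro x hx
  obtain ⟨hxu, hxS⟩ := mem_inter.1 hx
  exact (mem_cnbhd.1 hxu).resolve_right (hS u hu x hxS)

lemma notMem_of_cnbhd_inter_eq_singleton (hw : w ∈ S) (hzw : G.Adj z w)
    (hx : cnbhd G x ∩ S = {z}) : x ∉ S := by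
  have hmem : ∀ y ∈ cnbhd G x, y ∈ S → y = z := fun y hy hyS =>
    mem_singleton.1 (hx ▸ mem_inter.2 ⟨hy, hyS⟩)
  intro hxS
  obtain rfl := hmem x (self_mem_cnbhd G x) hxS
  exact G.ne_of_adj hzw (hmem w (mem_cnbhd.2 (Or.inr hzw)) hw).symm

end PrivateDominators

section GameValue

variable {G : SimpleGraph V} {D : Finset V} {u : V} {fuel k : ℕ}

lemma exists_giAux_succ_le (hu : u ∈ undom G D) :
    ∃ v ∈ cnbhd G u, giAux G (fuel + 1) D ≤ giAux G fuel (insert v D) + 1 := by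
  rw [giAux, dif_pos ⟨u, hu⟩]
  obtain ⟨v, hv, hmax⟩ := exists_mem_eq_sup' ⟨u, self_mem_cnbhd G u⟩
    fun v => giAux G fuel (insert v D) + 1
  exact ⟨v, hv, (inf'_le _ hu).trans hmax.le⟩

lemma le_giAux_succ (hne : (undom G D).Nonempty)
    (h : ∀ u ∈ undom G D, ∃ v ∈ cnbhd G u, k ≤ giAux G fuel (insert v D) + 1) :
    k ≤ giAux G (fuel + 1) D := by
  rw [giAux, dif_pos hne]
  exact le_inf' _ _ fun u hu => (le_sup'_iff _).2 (h u hu)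

lemma giAux_le_card_undom (G : SimpleGraph V) (fuel : ℕ) (D : Finset V) :
    giAux G fuel D ≤ #(undom G D) := by
  induction fuel generalizing D with
  | zero => simp [giAux]
  | succ fuel ih =>
    obtain hempty | ⟨u, hu⟩ := (undom G D).eq_empty_or_nonempty
    · simp [giAux, hempty]
    obtain ⟨v, hv, hle⟩ := exists_giAux_succ_le (fuel := fuel) hu
    have hnew : 0 < #(cnbhd G v ∩ undom G D) :=
      card_pos.2 ⟨u, mem_inter.2 ⟨mem_cnbhd_comm.1 hv, hu⟩⟩
    have := card_undom_insert G v D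
    have := ih (insert v D)
    omega

lemma card_undom_le_giAux (hP : HasPrivateDominators G (undom G D))
    (hfuel : #(undom G D) ≤ fuel) : #(undom G D) ≤ giAux G fuel D := by
  induction fuel generalizing D with
  | zero => omega
  | succ fuel ih =>
    obtain hempty | hne := (undom G D).eq_empty_or_nonempty
    · simp [hempty]
    refine le_giAux_succ hne fun u hu => ?_
    obtain ⟨v, hv, hvS⟩ := hP u hu
    have hcard := card_undom_insert G v D
    rw [hvS, card_singleton] at hcard
    have := ih (hP.mono (undom_insert_subset G v D)) (by omega)
    exact ⟨v, hv, by omega⟩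

lemma hasPrivateDominators_of_card_undom_le_giAux (h : #(undom G D) ≤ giAux G fuel D) :
    HasPrivateDominators G (undom G D) := by
  intro u hu
  cases fuel with
  | zero => exact absurd (Nat.le_zero.1 h) (card_pos.2 ⟨u, hu⟩).ne'
  | succ fuel =>
    obtain ⟨v, hv, hle⟩ := exists_giAux_succ_le (fuel := fuel) hu
    have hu' : u ∈ cnbhd G v ∩ undom G D := mem_inter.2 ⟨mem_cnbhd_comm.1 hv, hu⟩
    have := card_undom_insert G v D
    have := giAux_le_card_undom G fuel (insert v D)
    have hone : #(cnbhd G v ∩ undom G D) ≤ 1 := by omega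
    exact ⟨v, hv, eq_singleton_iff_unique_mem.2 ⟨hu', fun x hx => card_le_one.1 hone x hx u hu'⟩⟩

end GameValue

section IndicatedDomNum

variable {G : SimpleGraph V} {B : Finset V} {k : ℕ}

lemma indicatedDomNum_eq_giAux_succ [Nonempty V] (G : SimpleGraph V) :
    indicatedDomNum G = giAux G (Fintype.card V - 1 + 1) ∅ := by
  rw [indicatedDomNum, Nat.sub_add_cancel Fintype.card_pos]

lemma exists_indicatedDomNum_le [Nonempty V] (G : SimpleGraph V) :
    ∃ v, indicatedDomNum G ≤ giAux G (Fintype.card V - 1) {v} + 1 := by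
  rw [indicatedDomNum_eq_giAux_succ]
  obtain ⟨v, -, hv⟩ := exists_giAux_succ_le (fuel := Fintype.card V - 1)
    (show Classical.arbitrary V ∈ undom G ∅ by simp [undom_empty])
  exact ⟨v, hv⟩

lemma le_indicatedDomNum [Nonempty V]
    (h : ∀ u, ∃ v ∈ cnbhd G u, k ≤ giAux G (Fintype.card V - 1) {v} + 1) :
    k ≤ indicatedDomNum G := by
  rw [indicatedDomNum_eq_giAux_succ]
  exact le_giAux_succ (by simp [undom_empty]) fun u _ => h u

lemma indicatedDomNum_le_card_sub_minDegree (G : SimpleGraph V) :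
    indicatedDomNum G ≤ Fintype.card V - G.minDegree := by
  cases isEmpty_or_nonempty V
  · simp [indicatedDomNum, giAux]
  obtain ⟨v, hv⟩ := exists_indicatedDomNum_le G
  have := giAux_le_card_undom G (Fintype.card V - 1) {v}
  have := card_undom_singleton G v
  have := G.minDegree_le_degree v
  omega

lemma exists_hasPrivateDominators_of_indicatedDomNum_eq [Nonempty V]
    (h : indicatedDomNum G = Fintype.card V - G.minDegree) :
    ∃ v, G.degree v = G.minDegree ∧ HasPrivateDominators G (cnbhd G v)ᶜ := by
  obtain ⟨v, hv⟩ := exists_indicatedDomNum_le G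
  have := giAux_le_card_undom G (Fintype.card V - 1) {v}
  have := card_undom_singleton G v
  have := G.minDegree_le_degree v
  refine ⟨v, by omega, ?_⟩
  rw [← undom_singleton]
  exact hasPrivateDominators_of_card_undom_le_giAux (fuel := Fintype.card V - 1) (by omega)

lemma compl_cnbhd_eq_erase (hind : ∀ x ∈ B, ∀ y ∈ B, ¬ G.Adj x y)
    (hjoin : ∀ a ∉ B, ∀ b ∈ B, G.Adj a b) {b : V} (hb : b ∈ B) :
    (cnbhd G b)ᶜ = B.erase b := by
  ext x
  by_cases hx : x ∈ B
  · simp [hx, hind b hb x hx]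
  · simp [hx, ne_of_mem_of_not_mem hb hx |>.symm, (hjoin x hx b hb).symm]

lemma card_le_indicatedDomNum (hB : B.Nonempty) (hind : ∀ x ∈ B, ∀ y ∈ B, ¬ G.Adj x y)
    (hjoin : ∀ a ∉ B, ∀ b ∈ B, G.Adj a b) : #B ≤ indicatedDomNum G := by
  obtain ⟨b₀, hb₀⟩ := hB
  have : Nonempty V := ⟨b₀⟩
  refine le_indicatedDomNum fun u => ?_
  obtain ⟨b, hb, hub⟩ : ∃ b ∈ B, b ∈ cnbhd G u := by
    by_cases hu : u ∈ B
    · exact ⟨u, hu, self_mem_cnbhd G u⟩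
    · exact ⟨b₀, hb₀, mem_cnbhd.2 (Or.inr (hjoin u hu b₀ hb₀))⟩
  have hundom : undom G {b} = B.erase b := by
    rw [undom_singleton, compl_cnbhd_eq_erase hind hjoin hb]
  have hP : HasPrivateDominators G (undom G {b}) :=
    (hasPrivateDominators_of_independent hind).mono (hundom ▸ erase_subset b B)
  have hcard : #(undom G {b}) + 1 = #B := by
    rw [hundom, card_erase_add_one hb]
  have hfuel : #(undom G {b}) ≤ Fintype.card V - 1 := by
    have := card_le_univ B
    omega
  have := card_undom_le_giAux hP hfuel
  exact ⟨b, hub, by omega⟩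

end IndicatedDomNum

section MinimumDegree

variable {G : SimpleGraph V} {u v : V}

lemma neighborFinset_eq_of_forall_not_adj (hdeg : G.degree v = G.minDegree)
    (hu : u ∉ cnbhd G v) (hiso : ∀ w ∉ cnbhd G v, ¬ G.Adj u w) :
    G.neighborFinset u = G.neighborFinset v := by
  refine eq_of_subset_of_card_le (fun w hw => ?_) ?_
  · rw [SimpleGraph.mem_neighborFinset] at hw ⊢
    by_contra hvw
    refine hiso w (fun hwv => ?_) hw
    rcases mem_cnbhd.1 hwv with hwv | hvw'
    · exact hu (mem_cnbhd.2 (Or.inr (hwv ▸ hw.symm)))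
    · exact hvw hvw'
  · rw [SimpleGraph.card_neighborFinset_eq_degree, SimpleGraph.card_neighborFinset_eq_degree, hdeg]
    exact G.minDegree_le_degree u

lemma independent_compl_cnbhd (hn : 2 * G.minDegree + 2 ≤ Fintype.card V)
    (hdeg : G.degree v = G.minDegree) (hP : HasPrivateDominators G (cnbhd G v)ᶜ) :
    ∀ x ∈ (cnbhd G v)ᶜ, ∀ y ∈ (cnbhd G v)ᶜ, ¬ G.Adj x y := by
  set S := (cnbhd G v)ᶜ
  choose! g hgN hgS using hP
  by_contra! ⟨x, hx, y, hy, hxy⟩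
  set S₀ := S.filter fun z => ∃ w ∈ S, G.Adj z w
  have hg_mem : ∀ z ∈ S₀, g z ∈ G.neighborFinset v := by
    intro z hz
    obtain ⟨hzS, w, hwS, hzw⟩ := mem_filter.1 hz
    have hgz := notMem_of_cnbhd_inter_eq_singleton hwS hzw (hgS z hzS)
    rw [mem_compl, not_not] at hgz
    rcases mem_cnbhd.1 hgz with hgv | hvg
    · exact absurd (hgv ▸ mem_cnbhd_comm.1 (hgN z hzS)) (mem_compl.1 hzS)
    · exact (G.mem_neighborFinset v _).2 hvg
  have hg_inj : Set.InjOn g S₀ := by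
    intro z hz z' hz' hgzz'
    have := hgS z (filter_subset _ _ hz)
    rw [hgzz', hgS z' (filter_subset _ _ hz')] at this
    exact (singleton_inj.1 this).symm
  have hS₀ : #S₀ < #S := by
    have hS₀N := card_le_card_of_injOn g hg_mem hg_inj
    have hS : #S + #(cnbhd G v) = Fintype.card V := card_compl_add_card _
    rw [SimpleGraph.card_neighborFinset_eq_degree] at hS₀N
    rw [card_cnbhd] at hS
    omega
  obtain ⟨z, hzS, hzS₀⟩ := exists_mem_notMem_of_card_lt_card hS₀
  have hNz := neighborFinset_eq_of_forall_not_adj hdeg (mem_compl.1 hzS)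
    fun w hw hzw => hzS₀ (mem_filter.2 ⟨hzS, w, mem_compl.2 hw, hzw⟩)
  have hxS₀ : x ∈ S₀ := mem_filter.2 ⟨hx, y, hy, hxy⟩
  have hzg : G.Adj z (g x) := by
    have := hg_mem x hxS₀
    rwa [← hNz, SimpleGraph.mem_neighborFinset] at this
  have hzx : z ∈ cnbhd G (g x) ∩ S := mem_inter.2 ⟨mem_cnbhd.2 (Or.inr hzg.symm), hzS⟩
  rw [hgS x hx, mem_singleton] at hzx
  exact hzS₀ (hzx ▸ hxS₀)

lemma exists_independent_join_of_hasPrivateDominators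
    (hn : 2 * G.minDegree + 2 ≤ Fintype.card V) (hdeg : G.degree v = G.minDegree)
    (hP : HasPrivateDominators G (cnbhd G v)ᶜ) :
    ∃ B : Finset V, #B = Fintype.card V - G.minDegree ∧
      (∀ x ∈ B, ∀ y ∈ B, ¬ G.Adj x y) ∧ (∀ a ∉ B, ∀ b ∈ B, G.Adj a b) := by
  have hind := independent_compl_cnbhd hn hdeg hP
  have hN : ∀ u, ¬ G.Adj v u → ∀ w, G.Adj u w ↔ G.Adj v w := by
    intro u hvu w
    by_cases huv : u = v
    · rw [huv]
    have hu : u ∉ cnbhd G v := by simp [huv, hvu]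
    have := neighborFinset_eq_of_forall_not_adj hdeg hu
      fun w hw => hind u (mem_compl.2 hu) w (mem_compl.2 hw)
    simpa using Finset.ext_iff.1 this w
  refine ⟨(G.neighborFinset v)ᶜ, ?_, ?_, ?_⟩
  · rw [card_compl, SimpleGraph.card_neighborFinset_eq_degree, hdeg]
  · intro x hx y hy
    simp only [mem_compl, SimpleGraph.mem_neighborFinset] at hx hy
    rw [hN x hx]
    exact hy
  · intro a ha b hb
    simp only [mem_compl, SimpleGraph.mem_neighborFinset, not_not] at ha hb
    exact ((hN b hb a).2 ha).symm

end MinimumDegree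

/-- for `n ≥ 2δ + 2`, `γᵢ(G) = n - δ` iff `G` has a spanning
complete bipartite subgraph `K_{δ, n-δ}` whose part `B` of size `n - δ` is
independent in `G`. -/
theorem stmt4 {V : Type*} [Fintype V] (G : SimpleGraph V)
    (h : 2 * G.minDegree + 2 ≤ Fintype.card V) :
    indicatedDomNum G = Fintype.card V - G.minDegree ↔
      ∃ B : Finset V, B.card = Fintype.card V - G.minDegree ∧
        (∀ x ∈ B, ∀ y ∈ B, ¬ G.Adj x y) ∧
        (∀ a ∉ B, ∀ b ∈ B, G.Adj a b) := by
  have : Nonempty V := Fintype.card_pos_iff.1 (by omega)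
  constructor
  · intro hγ
    obtain ⟨v, hdeg, hP⟩ := exists_hasPrivateDominators_of_indicatedDomNum_eq hγ
    exact exists_independent_join_of_hasPrivateDominators h hdeg hP
  · rintro ⟨B, hcard, hind, hjoin⟩
    refine le_antisymm (indicatedDomNum_le_card_sub_minDegree G) ?_
    exact hcard ▸ card_le_indicatedDomNum (card_pos.1 (by omega)) hind hjoin

end IndicatedDom
end
end

section
/- For all n ≥ k ≥ 2, γᵢ(P_n^k) ≤ ((⌈log₂(k+1)⌉ + 2)/(2k+2))·n + ⌈log₂(k+1)⌉ + 2. -/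
open Finset

open scoped Classical

noncomputable section

/-!
Dominator plays `P_n^k` window by window: the vertices still undominated lie in a window of at
most `2k+2` consecutive vertices or to the right of it. He indicates the undominated vertex `u`
of the window closest to its midpoint. Whatever `v ∈ N[u]` Staller selects dominates every vertex
within distance `k` of `v`; as the window is too short to hold undominated vertices on both sides
of `v`, those that remain in it all lie on one side of the midpoint, so the window halves. A
window of `s` vertices is therefore cleared within `Nat.size s ≤ ⌈log₂(k+1)⌉ + 2` selections,
after which Dominator opens a new window at the least undominated vertex; there are at most
`⌈n/(2k+2)⌉` windows.
-/

lemma Nat.size_div_two_add_one_le {s : ℕ} (hs : s ≠ 0) : (s / 2).size + 1 ≤ s.size := by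
  obtain ⟨b, m, rfl⟩ : ∃ b m, s = Nat.bit b m := ⟨s.bodd, s.div2, (Nat.bit_bodd_div2 s).symm⟩
  rw [Nat.size_bit hs, Nat.bit_div_two]

lemma Nat.size_le_clog_add_two {s k : ℕ} (hs : s ≤ 2 * k + 2) :
    s.size ≤ Nat.clog 2 (k + 1) + 2 := by
  have := Nat.le_pow_clog one_lt_two (k + 1)
  rw [Nat.size_le, pow_add]
  omega

lemma Nat.ceilDiv_sub_add_one_le {r q : ℕ} (hq : 0 < q) (hr : 0 < r) :
    (r - q) ⌈/⌉ q + 1 ≤ r ⌈/⌉ q := by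
  simp only [Nat.ceilDiv_eq_add_pred_div]
  rcases le_or_gt q r with hqr | hrq
  · rw [← Nat.add_div_right _ hq]
    exact Nat.div_le_div_right (by omega)
  · rw [Nat.div_eq_of_lt (by omega : r - q + q - 1 < q)]
    exact (Nat.one_le_div_iff hq).mpr (by omega)

lemma Nat.cast_ceilDiv_le {a b : ℕ} (hb : 0 < b) : ((a ⌈/⌉ b : ℕ) : ℝ) ≤ a / b + 1 := by
  have hb' : (0 : ℝ) < b := by exact_mod_cast hb
  calc ((a ⌈/⌉ b : ℕ) : ℝ) ≤ ((a + b - 1 : ℕ) : ℝ) / b := Nat.cast_div_le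
    _ ≤ (a + b) / b := by gcongr; norm_cast; omega
    _ = a / b + 1 := by field_simp

namespace IndicatedDom

section Game

variable {V : Type*} [Fintype V] {G : SimpleGraph V}

lemma mem_undom {D : Finset V} {x : V} : x ∈ undom G D ↔ ∀ v ∈ D, x ∉ cnbhd G v := by
  simp [undom]

lemma mem_undom_insert {D : Finset V} {v x : V} :
    x ∈ undom G (insert v D) ↔ x ∈ undom G D ∧ x ∉ cnbhd G v := by
  simp only [mem_undom, forall_mem_insert, and_comm]

lemma giAux_succ_le {fuel N : ℕ} {D : Finset V}
    (h : (undom G D).Nonempty →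
      ∃ u ∈ undom G D, ∀ v ∈ cnbhd G u, giAux G fuel (insert v D) + 1 ≤ N) :
    giAux G (fuel + 1) D ≤ N := by
  rw [giAux]
  split_ifs with hD
  · obtain ⟨u, hu, hN⟩ := h hD
    exact (inf'_le _ hu).trans (sup'_le _ _ hN)
  · exact N.zero_le

end Game

section PathPower

variable {n k : ℕ}

lemma mem_cnbhd_pathPow {v x : Fin n} :
    x ∈ cnbhd (pathPow n k) v ↔ (v : ℕ) ≤ x + k ∧ (x : ℕ) ≤ v + k := by
  simp only [cnbhd, mem_insert, SimpleGraph.mem_neighborFinset]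
  simp only [pathPow, ne_eq, Fin.ext_iff]
  omega

def UndomInWindow (n k : ℕ) (D : Finset (Fin n)) (a B t : ℕ) : Prop :=
  ∀ x ∈ undom (pathPow n k) D, (a ≤ (x : ℕ) ∧ (x : ℕ) < B) ∨ t ≤ (x : ℕ)

def undomWindow (n k : ℕ) (D : Finset (Fin n)) (a B : ℕ) : Finset (Fin n) :=
  (undom (pathPow n k) D).filter fun x => a ≤ (x : ℕ) ∧ (x : ℕ) < B

lemma exists_halving_indication {D : Finset (Fin n)} {a B t : ℕ} (hB : B ≤ a + 2 * k + 2)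
    (hD : UndomInWindow n k D a B t) (hS : (undomWindow n k D a B).Nonempty) :
    ∃ u ∈ undom (pathPow n k) D, ∀ v ∈ cnbhd (pathPow n k) u, ∃ a' B',
      a ≤ a' ∧ B' ≤ B ∧ (B' - a').size + 1 ≤ (B - a).size ∧
        ∀ x ∈ undom (pathPow n k) D, x ∉ cnbhd (pathPow n k) v →
          (a' ≤ (x : ℕ) ∧ (x : ℕ) < B') ∨ t ≤ (x : ℕ) := by
  set m := a + (B - a) / 2
  obtain ⟨u, hu, hmin⟩ := exists_min_image _ (fun y : Fin n => Nat.dist y m) hS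
  obtain ⟨hu, hua, huB⟩ := mem_filter.mp hu
  refine ⟨u, hu, fun v hv => ?_⟩
  rw [mem_cnbhd_pathPow] at hv
  have hsize : ∀ {a' B'}, B' - a' ≤ (B - a) / 2 → (B' - a').size + 1 ≤ (B - a).size :=
    fun h => (Nat.add_le_add_right (Nat.size_le_size h) 1).trans
      (Nat.size_div_two_add_one_le (by omega))
  -- A survivor of the window is farther than `k` from `v`, hence no closer to `m` than `u` is.
  have survivor : ∀ x ∈ undom (pathPow n k) D, x ∉ cnbhd (pathPow n k) v → a ≤ (x : ℕ) →
      (x : ℕ) < B → ((v : ℕ) + k < x ∧ m < x) ∨ ((x : ℕ) + k < v ∧ (x : ℕ) < m) := by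
    intro x hx hxv hxa hxB
    rw [mem_cnbhd_pathPow] at hxv
    have := hmin x (mem_filter.mpr ⟨hx, hxa, hxB⟩)
    simp only [Nat.dist] at this
    omega
  by_cases hright : ∃ x ∈ undom (pathPow n k) D, x ∉ cnbhd (pathPow n k) v ∧
      a ≤ (x : ℕ) ∧ (x : ℕ) < B ∧ (v : ℕ) + k < x
  · obtain ⟨x₀, hx₀, hx₀v, hx₀a, hx₀B, hvx₀⟩ := hright
    refine ⟨m + 1, B, by omega, le_rfl, hsize (by omega), fun x hx hxv => ?_⟩
    rcases hD x hx with ⟨hxa, hxB⟩ | hxt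
    · have := survivor x hx hxv hxa hxB
      omega
    · exact .inr hxt
  · push Not at hright
    refine ⟨a, m, le_rfl, by omega, hsize (by omega), fun x hx hxv => ?_⟩
    rcases hD x hx with ⟨hxa, hxB⟩ | hxt
    · have := survivor x hx hxv hxa hxB
      have := hright x hx hxv hxa hxB
      omega
    · exact .inr hxt

/-- Selections Dominator may still need: `Nat.size` of the current window for the binary search,
and `⌈log₂(k+1)⌉ + 2` for each window of `2k+2` vertices of the tail from `t` on. -/
def windowBudget (n k a B t : ℕ) : ℕ :=
  (B - a).size + (Nat.clog 2 (k + 1) + 2) * ((n - t) ⌈/⌉ (2 * k + 2))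

lemma windowBudget_reopen_le {x₀ a B t : ℕ} (ht : t ≤ x₀) (hx₀ : x₀ < n) :
    windowBudget n k x₀ (x₀ + 2 * k + 2) (x₀ + 2 * k + 2) ≤ windowBudget n k a B t := by
  have hsize := Nat.size_le_clog_add_two (s := x₀ + 2 * k + 2 - x₀) (k := k) (by omega)
  have hstep := Nat.ceilDiv_sub_add_one_le (r := n - x₀) (q := 2 * k + 2) (by omega) (by omega)
  have hmono : (n - x₀) ⌈/⌉ (2 * k + 2) ≤ (n - t) ⌈/⌉ (2 * k + 2) :=
    (gc_mul_ceilDiv (by omega : 0 < 2 * k + 2)).monotone_l (by omega)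
  unfold windowBudget
  rw [show n - (x₀ + 2 * k + 2) = n - x₀ - (2 * k + 2) by omega]
  nlinarith

lemma exists_window_of_nonempty {D : Finset (Fin n)} {a B t : ℕ} (hB : B ≤ a + 2 * k + 2)
    (hD : UndomInWindow n k D a B t) (hne : (undom (pathPow n k) D).Nonempty) :
    ∃ a' B' t', B' ≤ a' + 2 * k + 2 ∧ UndomInWindow n k D a' B' t' ∧
      (undomWindow n k D a' B').Nonempty ∧ windowBudget n k a' B' t' ≤ windowBudget n k a B t := by
  by_cases hS : (undomWindow n k D a B).Nonempty
  · exact ⟨a, B, t, hB, hD, hS, le_rfl⟩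
  set x₀ := (undom (pathPow n k) D).min' hne
  have hx₀ : x₀ ∈ undom (pathPow n k) D := min'_mem _ _
  have hx₀t : t ≤ (x₀ : ℕ) :=
    (hD x₀ hx₀).resolve_left fun hwin => hS ⟨x₀, mem_filter.mpr ⟨hx₀, hwin⟩⟩
  refine ⟨x₀, x₀ + 2 * k + 2, x₀ + 2 * k + 2, by omega, fun x hx => ?_,
    ⟨x₀, mem_filter.mpr ⟨hx₀, le_rfl, by omega⟩⟩, windowBudget_reopen_le hx₀t x₀.isLt⟩
  have : x₀ ≤ x := min'_le _ _ hx
  omega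

lemma giAux_pathPow_le (fuel : ℕ) {D : Finset (Fin n)} {a B t : ℕ} (hB : B ≤ a + 2 * k + 2)
    (hD : UndomInWindow n k D a B t) :
    giAux (pathPow n k) fuel D ≤ windowBudget n k a B t := by
  induction fuel generalizing D a B t with
  | zero => exact Nat.zero_le _
  | succ fuel ih =>
    refine giAux_succ_le fun hne => ?_
    obtain ⟨a, B, t, hB, hD, hS, hbudget⟩ := exists_window_of_nonempty hB hD hne
    obtain ⟨u, hu, hmove⟩ := exists_halving_indication hB hD hS
    refine ⟨u, hu, fun v hv => ?_⟩
    obtain ⟨a', B', ha', hB', hsize, hsurv⟩ := hmove v hv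
    have hrest := ih (a := a') (B := B') (t := t) (by omega) fun x hx =>
      hsurv x (mem_undom_insert.mp hx).1 (mem_undom_insert.mp hx).2
    unfold windowBudget at *
    omega

end PathPower

theorem stmt13_general (n k : ℕ) :
    (indicatedDomNum (pathPow n k) : ℝ) ≤
      ((Nat.clog 2 (k + 1) + 2 : ℝ) / (2 * k + 2)) * n + Nat.clog 2 (k + 1) + 2 := by
  have hgame : indicatedDomNum (pathPow n k) ≤
      (Nat.clog 2 (k + 1) + 2) * (n ⌈/⌉ (2 * k + 2)) := by
    simpa [indicatedDomNum, windowBudget] using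
      giAux_pathPow_le (n := n) (k := k) (Fintype.card (Fin n)) (D := ∅) (a := 0) (B := 0)
        (t := 0) (by omega) fun x _ => .inr x.val.zero_le
  calc (indicatedDomNum (pathPow n k) : ℝ)
      ≤ (Nat.clog 2 (k + 1) + 2 : ℝ) * (n ⌈/⌉ (2 * k + 2) : ℕ) := by exact_mod_cast hgame
    _ ≤ (Nat.clog 2 (k + 1) + 2 : ℝ) * (n / (2 * k + 2) + 1) := by
      gcongr
      exact_mod_cast Nat.cast_ceilDiv_le (a := n) (b := 2 * k + 2) (by omega)
    _ = _ := by ring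

/-- for `n ≥ k ≥ 2`,
`γᵢ(P_n^k) ≤ ((⌈log₂(k+1)⌉ + 2)/(2k+2)) ⋅ n + ⌈log₂(k+1)⌉ + 2`. -/
theorem stmt13 (n k : ℕ) (hk : 2 ≤ k) (hn : k ≤ n) :
    (indicatedDomNum (pathPow n k) : ℝ) ≤
      ((Nat.clog 2 (k + 1) + 2 : ℝ) / (2 * k + 2)) * n + Nat.clog 2 (k + 1) + 2 :=
  stmt13_general n k

end IndicatedDom
end
end
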